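/- Let n ≥ 2, φ : ℤ^n → V an S_n-equivariant epimorphism onto a finite abelian S_n-group. If the restriction of φ to ℤ^{n-1} × {0} is not surjective and V is not isomorphic to (ℤ/2ℤ)^n, then V has at least 2^{n+1} elements. -/

import Mathlib

/-!
Write `v i = φ (eᵢ)`. That `φ` is not onto on the hyperplane `xₙ = 0` says that `vₙ` does not
lie in the subgroup generated by the other `vⱼ`; by symmetry no `vᵢ` does, and all `vᵢ` have the
same order `d`. If `d` is prime, the `vᵢ` are then an `𝔽_d`-basis of `V`, so `V ≅ (ℤ/d)ⁿ`: this
rules out `d = 2`, and `d = 3` gives `|V| = 3ⁿ ≥ 2ⁿ⁺¹`. Otherwise `d ≥ 4`; adjoining the `vᵢ` one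
at a time, the subgroup starts as `⟨v₁⟩` of order `d` and at least doubles at each of the
remaining `n - 1` steps, so `|V| ≥ d · 2ⁿ⁻¹ ≥ 2ⁿ⁺¹`.
-/

open AddSubgroup

theorem two_pow_succ_le_three_pow {n : ℕ} (hn : 2 ≤ n) : 2 ^ (n + 1) ≤ 3 ^ n := by
  obtain ⟨m, rfl⟩ := Nat.exists_eq_add_of_le' hn
  calc 2 ^ (m + 2 + 1) = 8 * 2 ^ m := by ring
    _ ≤ 9 * 3 ^ m := by gcongr <;> norm_num
    _ = 3 ^ (m + 2) := by ring

theorem AddSubgroup.two_mul_card_le_card_of_lt {V : Type*} [AddCommGroup V] [Finite V]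
    {H K : AddSubgroup V} (h : H < K) : 2 * Nat.card H ≤ Nat.card K := by
  have hmul : Nat.card H * H.relIndex K = Nat.card K := by
    rw [← relIndex_bot_left, ← relIndex_bot_left, relIndex_mul_relIndex _ _ _ bot_le h.le]
  have hne0 : H.relIndex K ≠ 0 := by
    intro h0
    rw [h0, mul_zero] at hmul
    exact Nat.card_pos.ne hmul
  have hne1 : H.relIndex K ≠ 1 := fun h1 => h.not_ge (relIndex_eq_one.1 h1)
  rw [← hmul, mul_comm]
  exact Nat.mul_le_mul_left (Nat.card H) (show 2 ≤ H.relIndex K by omega)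

section Generators

variable {ι V : Type*} [AddCommGroup V] {v : ι → V}

theorem two_pow_card_mul_card_closure_le [Finite V] [DecidableEq ι]
    (hv : ∀ i, v i ∉ closure (v '' {i}ᶜ)) (s t : Finset ι) (hst : Disjoint s t) :
    2 ^ t.card * Nat.card (closure (v '' s)) ≤ Nat.card (closure (v '' ↑(s ∪ t))) := by
  induction t using Finset.induction_on with
  | empty => simp
  | insert j t hj ih =>
    rw [Finset.disjoint_insert_right] at hst
    have hlt : closure (v '' ↑(s ∪ t)) < closure (v '' ↑(s ∪ insert j t)) := by
      refine lt_of_le_of_ne (closure_mono (Set.image_mono ?_)) fun heq => hv j ?_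
      · gcongr
        exact Finset.subset_insert j t
      · have hj' : v j ∈ closure (v '' ↑(s ∪ insert j t)) :=
          subset_closure ⟨j, by simp, rfl⟩
        rw [← heq] at hj'
        refine closure_mono (Set.image_mono ?_) hj'
        rintro i hi rfl
        simp_all
    calc 2 ^ (insert j t).card * Nat.card (closure (v '' s))
        = 2 * (2 ^ t.card * Nat.card (closure (v '' s))) := by
          rw [Finset.card_insert_of_notMem hj, pow_succ]; ring
      _ ≤ 2 * Nat.card (closure (v '' ↑(s ∪ t))) := by gcongr; exact ih hst.2
      _ ≤ _ := two_mul_card_le_card_of_lt hlt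

theorem two_pow_mul_addOrderOf_le_card [Fintype ι] [Finite V]
    (hgen : closure (Set.range v) = ⊤) (hv : ∀ i, v i ∉ closure (v '' {i}ᶜ)) (i : ι) :
    2 ^ (Fintype.card ι - 1) * addOrderOf (v i) ≤ Nat.card V := by
  classical
  have h := two_pow_card_mul_card_closure_le hv {i} (Finset.univ.erase i)
    (Finset.disjoint_singleton_left.2 (Finset.notMem_erase i _))
  rwa [Finset.card_erase_of_mem (Finset.mem_univ i), Finset.card_univ, Finset.coe_singleton,
    Set.image_singleton, ← zmultiples_eq_closure, Nat.card_zmultiples,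
    Finset.singleton_union, Finset.insert_erase (Finset.mem_univ i), Finset.coe_univ,
    Set.image_univ, hgen, card_top] at h

theorem nonempty_addEquiv_pi_zmod [Fintype ι] {p : ℕ} [Fact p.Prime]
    (hgen : closure (Set.range v) = ⊤) (hv : ∀ i, v i ∉ closure (v '' {i}ᶜ))
    (hp : ∀ i, p • v i = 0) : Nonempty (V ≃+ (ι → ZMod p)) := by
  have hpV : ∀ x : V, p • x = 0 := by
    intro x
    have hx : x ∈ closure (Set.range v) := hgen ▸ mem_top x
    induction hx using closure_induction with
    | mem _ hx => obtain ⟨i, rfl⟩ := hx; exact hp i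
    | zero => exact smul_zero p
    | add _ _ _ _ hx hy => rw [smul_add, hx, hy, add_zero]
    | neg _ _ hx => rw [smul_neg, hx, neg_zero]
  have : Module (ZMod p) V := AddCommGroup.zmodModule hpV
  have hspan (s : Set V) :
      Submodule.span (ZMod p) s ≤ (toZModSubmodule p (closure s) : Submodule (ZMod p) V) :=
    Submodule.span_le.2 subset_closure
  have hli : LinearIndependent (ZMod p) v :=
    linearIndependent_iff_notMem_span.2 fun i hi =>
      hv i (hspan _ (by rwa [← Set.compl_eq_univ_sdiff] at hi))
  have hsp : ⊤ ≤ Submodule.span (ZMod p) (Set.range v) := by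
    rintro x -
    have hx : x ∈ closure (Set.range v) := hgen ▸ mem_top x
    exact (closure_le (K := (Submodule.span (ZMod p) (Set.range v)).toAddSubgroup)).2
      Submodule.subset_span hx
  exact ⟨(Module.Basis.mk hli hsp).equivFun.toAddEquiv⟩

variable [DistribMulAction (Equiv.Perm ι) V]

theorem notMem_closure_image_compl_of_perm_smul [DecidableEq ι]
    (hact : ∀ (σ : Equiv.Perm ι) i, σ • v i = v (σ i)) {i : ι}
    (hi : v i ∉ closure (v '' {i}ᶜ)) (j : ι) : v j ∉ closure (v '' {j}ᶜ) := by
  intro hj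
  apply hi
  let f := DistribSMul.toAddMonoidHom V (Equiv.swap j i)
  have hf : f (v j) ∈ closure (f '' (v '' {j}ᶜ)) := by
    rw [← AddMonoidHom.map_closure]
    exact mem_map_of_mem f hj
  have himg : f '' (v '' {j}ᶜ) = v '' {i}ᶜ := by
    rw [Set.image_image]
    simp only [f, DistribSMul.toAddMonoidHom_apply, hact]
    rw [← Set.image_image v, Set.image_compl_eq (Equiv.bijective _), Set.image_singleton,
      Equiv.swap_apply_left]
  rw [himg] at hf
  simpa [f, hact] using hf

theorem addOrderOf_eq_of_perm_smul [DecidableEq ι]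
    (hact : ∀ (σ : Equiv.Perm ι) i, σ • v i = v (σ i)) (i j : ι) :
    addOrderOf (v j) = addOrderOf (v i) := by
  rw [← Equiv.swap_apply_left i j, ← hact]
  exact addOrderOf_injective (DistribSMul.toAddMonoidHom V _) (MulAction.injective _) _

end Generators

section Epimorphism

variable {ι V : Type*} [Fintype ι] [DecidableEq ι] [AddCommGroup V] (φ : (ι → ℤ) →+ V)

theorem closure_range_map_single (hφ : Function.Surjective φ) :
    closure (Set.range fun i => φ (Pi.single i 1)) = ⊤ := by
  refine eq_top_iff.2 fun w _ => ?_
  obtain ⟨x, rfl⟩ := hφ w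
  rw [pi_eq_sum_univ' x, map_sum]
  refine sum_mem fun i _ => ?_
  rw [map_zsmul]
  exact zsmul_mem (subset_closure (Set.mem_range_self i)) _

theorem map_single_notMem_closure (hφ : Function.Surjective φ) (i : ι)
    (h : ¬ ∀ w, ∃ x : ι → ℤ, x i = 0 ∧ φ x = w) :
    φ (Pi.single i 1) ∉ closure ((fun j => φ (Pi.single j 1)) '' {i}ᶜ) := by
  set v : ι → V := fun j => φ (Pi.single j 1)
  intro hi
  have hle : closure (v '' {i}ᶜ) ≤ (Pi.evalAddMonoidHom (fun _ => ℤ) i).ker.map φ := by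
    rw [closure_le]
    rintro _ ⟨j, hj, rfl⟩
    exact mem_map_of_mem φ (AddMonoidHom.mem_ker.2 (Pi.single_eq_of_ne' hj 1))
  have htop : closure (Set.range v) ≤ closure (v '' {i}ᶜ) := by
    rw [closure_le]
    rintro _ ⟨j, rfl⟩
    by_cases hj : j = i
    · exact hj ▸ hi
    · exact subset_closure ⟨j, hj, rfl⟩
  refine h fun w => ?_
  obtain ⟨x, hx, rfl⟩ := hle (htop (closure_range_map_single φ hφ ▸ mem_top w))
  exact ⟨x, hx, rfl⟩

end Epimorphism

/-- If the restriction of an `S_n`-equivariant epimorphism `φ : ℤ^n → V` to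
`ℤ^{n-1} × {0}` is not surjective and `V ≇ (ℤ/2ℤ)^n`, then `|V| ≥ 2^{n+1}`. -/
theorem equivariant_epi_card_ge
    (n : ℕ) (hn : 2 ≤ n) (V : Type) [AddCommGroup V] [Fintype V]
    [DistribMulAction (Equiv.Perm (Fin n)) V]
    (φ : (Fin n → ℤ) →+ V) (hsurj : Function.Surjective φ)
    (hequiv : ∀ (σ : Equiv.Perm (Fin n)) (x : Fin n → ℤ),
      φ (fun i => x (σ⁻¹ i)) = σ • φ x)
    (hnotsurj : ¬ ∀ v : V, ∃ x : Fin n → ℤ,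
        x ⟨n - 1, by omega⟩ = 0 ∧ φ x = v)
    (hne : ¬ Nonempty (V ≃+ (Fin n → ZMod 2))) :
    2 ^ (n + 1) ≤ Fintype.card V := by
  set v : Fin n → V := fun i => φ (Pi.single i 1)
  have hact : ∀ (σ : Equiv.Perm (Fin n)) i, σ • v i = v (σ i) := fun σ i => by
    rw [← hequiv]
    exact congrArg φ (Pi.single_comp_equiv σ.symm i 1)
  have hgen := closure_range_map_single φ hsurj
  have hv : ∀ i, v i ∉ closure (v '' {i}ᶜ) :=
    notMem_closure_image_compl_of_perm_smul hact (map_single_notMem_closure φ hsurj _ hnotsurj)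
  set i₀ : Fin n := ⟨0, by omega⟩
  have hd : ∀ i, addOrderOf (v i₀) • v i = 0 := fun i =>
    addOrderOf_eq_of_perm_smul hact i₀ i ▸ addOrderOf_nsmul_eq_zero (v i)
  have hd0 : 0 < addOrderOf (v i₀) := addOrderOf_pos _
  have hd1 : addOrderOf (v i₀) ≠ 1 := fun h =>
    hv i₀ (AddMonoid.addOrderOf_eq_one_iff.1 h ▸ zero_mem _)
  obtain hd2 | hd3 | hd4 :
      addOrderOf (v i₀) = 2 ∨ addOrderOf (v i₀) = 3 ∨ 4 ≤ addOrderOf (v i₀) := by omega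
  · exact (hne (nonempty_addEquiv_pi_zmod hgen hv (hd2 ▸ hd))).elim
  · obtain ⟨e⟩ := nonempty_addEquiv_pi_zmod hgen hv (hd3 ▸ hd)
    rw [Fintype.card_congr e.toEquiv, Fintype.card_pi, Finset.prod_const, ZMod.card,
      Finset.card_univ, Fintype.card_fin]
    exact two_pow_succ_le_three_pow hn
  · have h := two_pow_mul_addOrderOf_le_card hgen hv i₀
    rw [Fintype.card_fin, Nat.card_eq_fintype_card] at h
    calc 2 ^ (n + 1) = 2 ^ (n - 1) * 4 := by
          rw [show n + 1 = n - 1 + 2 by omega, pow_add]; norm_num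
      _ ≤ 2 ^ (n - 1) * addOrderOf (v i₀) := by gcongr
      _ ≤ Fintype.card V := h
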